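/- arXiv:1304.6008 — 9 statements merged into one kernel-verified Lean document; each statement's English description precedes it below -/
import Mathlib

section
/- For every integer d ≥ 2 and every natural number n, the d-dimensional Catalan number satisfies the Pochhammer identity C_d(n) = d^{dn} · (∏_{k=1}^{d} (k/d)_n) / (n! · ∏_{k=2}^{d} (k)_n), where (a)_n = a(a+1)⋯(a+n-1) is the ascending factorial. (Equivalently, the ordinary generating function of C_d(n) is the generalized hypergeometric series _dF_{d-1} with upper parameters 1/d, 2/d, …, d/d, lower parameters 2, 3, …, d, and argument d^d z.) -/
open Finset

/-- The `d`-dimensional Catalan number `C_d(n)`. -/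
noncomputable def catalanD (d n : ℕ) : ℝ :=
  (∏ p ∈ Finset.range d, (p.factorial : ℝ) / ((n + p).factorial : ℝ)) *
    ((d * n).factorial : ℝ)

/-- Ascending factorial (Pochhammer symbol) `(a)_n = a (a+1) ⋯ (a+n-1)`. -/
noncomputable def ascFactorial (a : ℝ) (n : ℕ) : ℝ :=
  ∏ i ∈ Finset.range n, (a + i)

/-!
Both sides are quotients of factorials. In the numerator, the factors `d (k/d + i) = d i + k`
for `1 ≤ k ≤ d` and `i < n` run exactly once through `1, …, d n`, so
`d^{dn} ∏_k (k/d)_n = (dn)!`. In the denominator, `(k)_n = (n + k - 1)! / (k - 1)!`, and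
`n! = (1)_n` supplies the missing factor `k = 1`, giving `∏_{p<d} (n+p)!/p!`, which is exactly
the reciprocal of the product in `catalanD`.
-/

open scoped Nat

theorem ascFactorial_succ (a : ℝ) (n : ℕ) :
    ascFactorial a (n + 1) = ascFactorial a n * (a + n) :=
  prod_range_succ _ _

theorem ascFactorial_natCast (m n : ℕ) : ascFactorial m n = m.ascFactorial n := by
  simp [ascFactorial, Nat.ascFactorial_eq_prod_range]

theorem ascFactorial_natCast_succ (m n : ℕ) :
    ascFactorial ((m + 1 : ℕ) : ℝ) n = (m + n)! / m ! := by
  rw [ascFactorial_natCast, ← Nat.factorial_mul_ascFactorial, Nat.cast_mul,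
    mul_div_cancel_left₀ _ (by positivity)]

theorem prod_Icc_ascFactorial_natCast (d n : ℕ) :
    ∏ k ∈ Icc 1 d, ascFactorial (k : ℝ) n = ∏ p ∈ range d, ((n + p)! / p ! : ℝ) := by
  induction d with
  | zero => simp
  | succ d ih =>
    rw [prod_Icc_succ_top (by omega), prod_range_succ, ih, ascFactorial_natCast_succ, add_comm d]

theorem factorial_mul_prod_Icc_add (m e : ℕ) : m ! * ∏ k ∈ Icc 1 e, (m + k) = (m + e)! := by
  induction e with
  | zero => simp
  | succ e ih =>
    rw [prod_Icc_succ_top (by omega), ← mul_assoc, ih, ← add_assoc, Nat.factorial_succ, mul_comm]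

theorem pow_mul_prod_ascFactorial_div (d n : ℕ) (hd : d ≠ 0) :
    (d : ℝ) ^ (d * n) * ∏ k ∈ Icc 1 d, ascFactorial ((k : ℝ) / d) n = (d * n)! := by
  induction n with
  | zero => simp [ascFactorial]
  | succ n ih =>
    have hblock : (d : ℝ) ^ d * ∏ k ∈ Icc 1 d, ((k : ℝ) / d + n)
        = ∏ k ∈ Icc 1 d, ((d * n + k : ℕ) : ℝ) := by
      rw [show (d : ℝ) ^ d = ∏ _k ∈ Icc 1 d, (d : ℝ) by simp, ← prod_mul_distrib]
      refine prod_congr rfl fun k _ ↦ ?_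
      push_cast
      field_simp
      ring
    calc (d : ℝ) ^ (d * (n + 1)) * ∏ k ∈ Icc 1 d, ascFactorial ((k : ℝ) / d) (n + 1)
        = ((d : ℝ) ^ (d * n) * ∏ k ∈ Icc 1 d, ascFactorial ((k : ℝ) / d) n)
            * ((d : ℝ) ^ d * ∏ k ∈ Icc 1 d, ((k : ℝ) / d + n)) := by
          simp only [ascFactorial_succ, prod_mul_distrib, Nat.mul_succ, pow_add]
          ring
      _ = (d * n)! * ∏ k ∈ Icc 1 d, ((d * n + k : ℕ) : ℝ) := by rw [ih, hblock]
      _ = (d * (n + 1))! := by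
          rw [← Nat.cast_prod, ← Nat.cast_mul, factorial_mul_prod_Icc_add, mul_add, mul_one]

theorem catalanD_eq_div (d n : ℕ) :
    catalanD d n = (d * n)! / ∏ p ∈ range d, ((n + p)! / p ! : ℝ) := by
  rw [catalanD, div_eq_mul_inv, mul_comm, ← prod_inv_distrib]
  simp only [inv_div]

theorem catalanD_pochhammer (d : ℕ) (hd : 2 ≤ d) (n : ℕ) :
    catalanD d n =
      (d : ℝ) ^ (d * n) * (∏ k ∈ Finset.Icc 1 d, ascFactorial ((k : ℝ) / d) n) /
        ((n.factorial : ℝ) * ∏ k ∈ Finset.Icc 2 d, ascFactorial (k : ℝ) n) := by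
  have hden : (n ! : ℝ) * ∏ k ∈ Icc 2 d, ascFactorial (k : ℝ) n
      = ∏ k ∈ Icc 1 d, ascFactorial (k : ℝ) n := by
    rw [← insert_Icc_add_one_left_eq_Icc (by omega : 1 ≤ d), prod_insert (by simp),
      ascFactorial_natCast, Nat.one_ascFactorial]
    rfl
  rw [pow_mul_prod_ascFactorial_div d n (by omega), hden, prod_Icc_ascFactorial_natCast,
    catalanD_eq_div]
end

section
/- For every integer d ≥ 2, the sequence n ↦ (C_d(n))^{1/n} converges to d^d as n → ∞. Consequently the power series ∑_n C_d(n) z^n has radius of convergence d^{-d}. -/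
/-!
The ratio `C_d(n+1) / C_d(n) = ∏_{p<d} (dn+p+1)/(n+p+1)` tends to `d^d`. The ratio test then
gives the radius of convergence, and since `log C_d(n)` telescopes into the sum of the logarithms
of these ratios, their Cesàro mean `(log C_d(n)) / n` tends to `log d^d` as well.
-/

open Finset Filter Topology

section RatioTest

variable {𝕜 : Type*} [NormedField 𝕜] {a : ℕ → 𝕜} {L : ℝ}

lemma tendsto_norm_mul_pow_ratio
    (hL : Tendsto (fun n ↦ ‖a (n + 1)‖ / ‖a n‖) atTop (𝓝 L)) (z : 𝕜) :
    Tendsto (fun n ↦ ‖a (n + 1) * z ^ (n + 1)‖ / ‖a n * z ^ n‖) atTop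
      (𝓝 (L * ‖z‖)) := by
  refine (hL.mul_const ‖z‖).congr fun n ↦ ?_
  rcases eq_or_ne z 0 with rfl | hz
  · cases n <;> simp
  · have : ‖z‖ ^ n ≠ 0 := by positivity
    rw [norm_mul, norm_mul, norm_pow, norm_pow, pow_succ]
    field_simp

lemma summable_mul_pow_of_tendsto_ratio [CompleteSpace 𝕜] (ha : ∀ᶠ n in atTop, a n ≠ 0)
    (hL : Tendsto (fun n ↦ ‖a (n + 1)‖ / ‖a n‖) atTop (𝓝 L)) {z : 𝕜} (hz : ‖z‖ < L⁻¹) :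
    Summable fun n ↦ a n * z ^ n := by
  rcases eq_or_ne z 0 with rfl | hz0
  · exact summable_of_ne_finset_zero (s := {0}) fun n hn ↦ by simp_all
  have hL0 : 0 < L := inv_pos.mp ((norm_nonneg z).trans_lt hz)
  refine summable_of_ratio_test_tendsto_lt_one ?_ ?_ (tendsto_norm_mul_pow_ratio hL z)
  · exact (lt_inv_mul_iff₀ hL0).mp (by rwa [mul_one])
  · filter_upwards [ha] with n hn using mul_ne_zero hn (pow_ne_zero n hz0)

lemma not_summable_mul_pow_of_tendsto_ratio (hL0 : 0 < L)
    (hL : Tendsto (fun n ↦ ‖a (n + 1)‖ / ‖a n‖) atTop (𝓝 L)) {z : 𝕜} (hz : L⁻¹ < ‖z‖) :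
    ¬Summable fun n ↦ a n * z ^ n :=
  not_summable_of_ratio_test_tendsto_gt_one ((inv_lt_iff_one_lt_mul₀' hL0).mp hz)
    (tendsto_norm_mul_pow_ratio hL z)

end RatioTest

lemma tendsto_rpow_one_div_of_tendsto_ratio {a : ℕ → ℝ} {L : ℝ} (ha : ∀ n, 0 < a n)
    (hL : Tendsto (fun n ↦ a (n + 1) / a n) atTop (𝓝 L)) (hL0 : 0 < L) :
    Tendsto (fun n : ℕ ↦ a n ^ ((1 : ℝ) / n)) atTop (𝓝 L) := by
  have hlog_eq : ∀ n,
      Real.log (a n) = Real.log (a 0) + ∑ k ∈ range n, Real.log (a (k + 1) / a k) := by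
    intro n
    simp only [Real.log_div (ha _).ne' (ha _).ne']
    rw [sum_range_sub (fun k ↦ Real.log (a k))]
    ring
  have hmean : Tendsto (fun n : ℕ ↦ (n : ℝ)⁻¹ * Real.log (a n)) atTop
      (𝓝 (Real.log L)) := by
    have h := (tendsto_inv_atTop_nhds_zero_nat.mul_const (Real.log (a 0))).add
      (hL.log hL0.ne').cesaro
    rw [zero_mul, zero_add] at h
    exact h.congr fun n ↦ by rw [hlog_eq n, mul_add]
  have h := (Real.continuous_exp.tendsto _).comp hmean
  rw [Real.exp_log hL0] at h
  exact h.congr fun n ↦ by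
    rw [Function.comp_apply, Real.rpow_def_of_pos (ha n), one_div, mul_comm]

lemma catalanD_pos (d n : ℕ) : 0 < catalanD d n := by
  unfold catalanD
  positivity

lemma catalanD_succ (d n : ℕ) :
    catalanD d (n + 1) =
      catalanD d n * ∏ p ∈ range d, ((d * n + p + 1 : ℝ) / (n + p + 1)) := by
  have hnum : ((d * (n + 1)).factorial : ℝ) =
      (d * n).factorial * ∏ p ∈ range d, (d * n + p + 1 : ℝ) := by
    rw [mul_add_one, ← Nat.factorial_mul_ascFactorial, Nat.ascFactorial_eq_prod_range]
    push_cast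
    simp only [add_right_comm]
  have hden : ∀ p, ((n + 1 + p).factorial : ℝ) = (n + p).factorial * (n + p + 1) := by
    intro p
    rw [add_right_comm, Nat.factorial_succ]
    push_cast
    ring
  simp only [catalanD, hnum, hden, ← div_div, prod_div_distrib]
  ring

lemma tendsto_catalanD_succ_div (d : ℕ) :
    Tendsto (fun n ↦ catalanD d (n + 1) / catalanD d n) atTop (𝓝 ((d : ℝ) ^ d)) := by
  have hfactor : ∀ p : ℕ,
      Tendsto (fun n : ℕ ↦ (d * n + p + 1 : ℝ) / (n + p + 1)) atTop (𝓝 d) := by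
    intro p
    have h := tendsto_add_mul_div_add_mul_atTop_nhds ((p : ℝ) + 1) ((p : ℝ) + 1) (d : ℝ)
      one_ne_zero
    rw [div_one] at h
    exact h.congr fun n ↦ by ring_nf
  have hprod := tendsto_finsetProd (range d) fun p _ ↦ hfactor p
  rw [prod_const, card_range] at hprod
  exact hprod.congr fun n ↦ by
    rw [catalanD_succ, mul_div_cancel_left₀ _ (catalanD_pos d n).ne']

theorem catalanD_root_limit_general (d : ℕ) :
    Filter.Tendsto (fun n : ℕ => (catalanD d n) ^ ((1 : ℝ) / n)) Filter.atTop
        (𝓝 ((d : ℝ) ^ (d : ℕ))) ∧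
      (∀ z : ℝ, |z| < ((d : ℝ) ^ (d : ℕ))⁻¹ →
        Summable (fun n : ℕ => catalanD d n * z ^ n)) ∧
      (∀ z : ℝ, ((d : ℝ) ^ (d : ℕ))⁻¹ < |z| →
        ¬ Summable (fun n : ℕ => catalanD d n * z ^ n)) := by
  have hpos : (0 : ℝ) < (d : ℝ) ^ d := by exact_mod_cast Nat.pow_self_pos
  have hratio := tendsto_catalanD_succ_div d
  have hnorm : Tendsto (fun n ↦ ‖catalanD d (n + 1)‖ / ‖catalanD d n‖) atTop
      (𝓝 ((d : ℝ) ^ d)) := by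
    simpa only [Real.norm_of_nonneg (catalanD_pos d _).le] using hratio
  refine ⟨tendsto_rpow_one_div_of_tendsto_ratio (catalanD_pos d) hratio hpos,
    fun z hz ↦ ?_, fun z hz ↦ ?_⟩
  · exact summable_mul_pow_of_tendsto_ratio
      (.of_forall fun n ↦ (catalanD_pos d n).ne') hnorm (by rwa [Real.norm_eq_abs])
  · exact not_summable_mul_pow_of_tendsto_ratio hpos hnorm (by rwa [Real.norm_eq_abs])

/-- `(C_d(n))^{1/n} → d^d`, and consequently the power series `∑ C_d(n) z^n`
has radius of convergence `d^{-d}`. -/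
theorem catalanD_root_limit (d : ℕ) (hd : 2 ≤ d) :
    Filter.Tendsto (fun n : ℕ => (catalanD d n) ^ ((1 : ℝ) / n)) Filter.atTop
        (𝓝 ((d : ℝ) ^ (d : ℕ))) ∧
      (∀ z : ℝ, |z| < ((d : ℝ) ^ (d : ℕ))⁻¹ →
        Summable (fun n : ℕ => catalanD d n * z ^ n)) ∧
      (∀ z : ℝ, ((d : ℝ) ^ (d : ℕ))⁻¹ < |z| →
        ¬ Summable (fun n : ℕ => catalanD d n * z ^ n)) :=
  catalanD_root_limit_general d
end

section
/- For every integer d ≥ 2, the sequence C_d(n) · n^{(d²-1)/2} / d^{dn} converges, as n → ∞, to the positive constant (2π)^{(1-d)/2} · d^{1/2} · ∏_{k=0}^{d-1} k!. In particular C_d(n) is asymptotic to (2π)^{(1-d)/2} d^{1/2} (∏_{k=0}^{d-1} k!) · n^{-(d²-1)/2} · d^{dn}. -/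
open Finset Filter Topology Real

/-!
Write `C_d(n) = (∏_{k<d} k!) · (dn)! / ∏_{p<d} (n+p)!`. Since `(n+p)! ~ n^p · n!`, the denominator
is `~ n^{d(d-1)/2} (n!)^d`, and Stirling's formula gives the multinomial asymptotics
`(dn)! / (n!)^d ~ √d (2πn)^{(1-d)/2} d^{dn}`. The powers of `n` combine to
`(1-d)/2 - d(d-1)/2 = -(d²-1)/2`.
-/

open Asymptotics
open scoped Nat

lemma natCast_add_isEquivalent (c : ℝ) :
    (fun n : ℕ => (n : ℝ) + c) ~[atTop] fun n => (n : ℝ) :=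
  IsEquivalent.refl.add_isLittleO <|
    (isLittleO_const_id_atTop c).comp_tendsto tendsto_natCast_atTop_atTop

lemma factorial_add_isEquivalent (p : ℕ) :
    (fun n : ℕ => ((n + p)! : ℝ)) ~[atTop] fun n => (n : ℝ) ^ p * n ! := by
  induction p with
  | zero => simpa using IsEquivalent.refl
  | succ p ih =>
    have h := (natCast_add_isEquivalent (p + 1)).mul ih
    refine (h.congr_left (Eventually.of_forall fun n => ?_)).congr_right
      (Eventually.of_forall fun n => ?_)
    · simp only [Pi.mul_apply, ← add_assoc, Nat.factorial_succ]
      push_cast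
      ring
    · simp only [Pi.mul_apply]
      ring

lemma prod_factorial_add_isEquivalent (d : ℕ) :
    (fun n : ℕ => ∏ p ∈ range d, ((n + p)! : ℝ)) ~[atTop]
      fun n => (n : ℝ) ^ d.choose 2 * (n ! : ℝ) ^ d := by
  refine (IsEquivalent.finsetProd fun p _ => factorial_add_isEquivalent p).congr_right
    (Eventually.of_forall fun n => ?_)
  dsimp only
  rw [prod_mul_distrib, prod_pow_eq_pow_sum, sum_range_id, prod_const, card_range,
    Nat.choose_two_right]

lemma rpow_one_sub_div_two {x : ℝ} (hx : 0 < x) (d : ℕ) :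
    x ^ ((1 - d : ℝ) / 2) = √x / √x ^ d := by
  rw [sqrt_eq_rpow, ← rpow_natCast, ← rpow_mul hx.le, ← rpow_sub hx]
  ring_nf

lemma factorial_mul_div_factorial_pow_isEquivalent {d : ℕ} (hd : 0 < d) :
    (fun n : ℕ => ((d * n)! : ℝ) / (n ! : ℝ) ^ d) ~[atTop]
      fun n => √d * (2 * π * n) ^ ((1 - d : ℝ) / 2) * (d : ℝ) ^ (d * n) := by
  have hdn : Tendsto (fun n : ℕ => d * n) atTop atTop :=
    tendsto_id.const_mul_atTop' hd
  have h := (Stirling.factorial_isEquivalent_stirling.comp_tendsto hdn).div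
    (Stirling.factorial_isEquivalent_stirling.pow d)
  refine h.congr_right ?_
  filter_upwards [eventually_gt_atTop 0] with n hn
  have hs : √(2 * ((d * n : ℕ) : ℝ) * π) = √d * √(2 * π * n) := by
    rw [← sqrt_mul (Nat.cast_nonneg _)]
    push_cast
    ring_nf
  have hp : (((d * n : ℕ) : ℝ) / rexp 1) ^ (d * n) = (d : ℝ) ^ (d * n) * ((n / rexp 1) ^ n) ^ d := by
    rw [← pow_mul, mul_comm n d, ← mul_pow]
    push_cast
    ring_nf
  simp only [Function.comp_apply, Pi.div_apply, Pi.pow_apply, hs, hp, mul_right_comm 2 (n : ℝ) π]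
  rw [rpow_one_sub_div_two (by positivity)]
  field_simp
  ring

lemma catalanD_eq_mul_div (d n : ℕ) :
    catalanD d n = (∏ p ∈ range d, (p ! : ℝ)) * (d * n)! / ∏ p ∈ range d, ((n + p)! : ℝ) := by
  rw [catalanD, prod_div_distrib, div_mul_eq_mul_div]

lemma mul_rpow_one_sub_div_two_div_pow_choose {n : ℝ} (hn : 0 < n) (d : ℕ) :
    (2 * π * n) ^ ((1 - d : ℝ) / 2) / n ^ d.choose 2 =
      (2 * π) ^ ((1 - d : ℝ) / 2) * n ^ (-(((d : ℝ) ^ 2 - 1) / 2)) := by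
  rw [mul_rpow (by positivity) hn.le, mul_div_assoc, ← rpow_natCast, ← rpow_sub hn,
    Nat.cast_choose_two]
  ring_nf

theorem catalanD_isEquivalent {d : ℕ} (hd : 0 < d) :
    (fun n => catalanD d n) ~[atTop] fun n : ℕ =>
      (2 * π) ^ ((1 - d : ℝ) / 2) * (d : ℝ) ^ ((1 : ℝ) / 2) * (∏ k ∈ range d, (k ! : ℝ)) *
        (n : ℝ) ^ (-(((d : ℝ) ^ 2 - 1) / 2)) * (d : ℝ) ^ (d * n) := by
  set P := ∏ k ∈ range d, (k ! : ℝ)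
  calc (fun n => catalanD d n)
      = fun n : ℕ => P * (d * n)! / ∏ p ∈ range d, ((n + p)! : ℝ) := funext (catalanD_eq_mul_div d)
    _ ~[atTop] fun n : ℕ => P * (d * n)! / ((n : ℝ) ^ d.choose 2 * (n ! : ℝ) ^ d) :=
      IsEquivalent.refl.div (prod_factorial_add_isEquivalent d)
    _ = fun n : ℕ => P * ((d * n)! / (n ! : ℝ) ^ d) / (n : ℝ) ^ d.choose 2 := by
      funext n
      field_simp
    _ ~[atTop] fun n : ℕ =>
        P * (√d * (2 * π * n) ^ ((1 - d : ℝ) / 2) * (d : ℝ) ^ (d * n)) / (n : ℝ) ^ d.choose 2 :=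
      (IsEquivalent.refl.mul (factorial_mul_div_factorial_pow_isEquivalent hd)).div IsEquivalent.refl
    _ =ᶠ[atTop] _ := by
      filter_upwards [eventually_gt_atTop 0] with n hn
      rw [sqrt_eq_rpow]
      linear_combination (P * (d : ℝ) ^ ((1 : ℝ) / 2) * (d : ℝ) ^ (d * n)) *
        mul_rpow_one_sub_div_two_div_pow_choose (Nat.cast_pos.mpr hn) d

/-- `C_d(n) ~ (2π)^{(1-d)/2} d^{1/2} (∏_{k<d} k!) · n^{-(d²-1)/2} · d^{dn}` as `n → ∞`. -/
theorem catalanD_asymptotics (d : ℕ) (hd : 2 ≤ d) :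
    Filter.Tendsto
      (fun n : ℕ => catalanD d n * (n : ℝ) ^ (((d : ℝ) ^ 2 - 1) / 2) / (d : ℝ) ^ (d * n))
      Filter.atTop
      (𝓝 ((2 * Real.pi) ^ ((1 - (d : ℝ)) / 2) * (d : ℝ) ^ ((1 : ℝ) / 2) *
        ∏ k ∈ Finset.range d, (k.factorial : ℝ))) := by
  have h := ((catalanD_isEquivalent (by omega : 0 < d)).mul
    (IsEquivalent.refl (u := fun n : ℕ => (n : ℝ) ^ (((d : ℝ) ^ 2 - 1) / 2)))).div
    (IsEquivalent.refl (u := fun n : ℕ => (d : ℝ) ^ (d * n)))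
  refine (isEquivalent_const_iff_tendsto (by positivity)).mp (h.congr_right ?_)
  filter_upwards [eventually_gt_atTop 0] with n hn
  have hn' : (0 : ℝ) < n := Nat.cast_pos.mpr hn
  rw [Pi.div_apply, Pi.mul_apply, Function.const_apply, rpow_neg hn'.le]
  field_simp
end

section
/- For every natural number n, ∫_0^4 x^n · (1/(2π)) · √((4 - x)/x) dx = C(n), where C(n) = (2n)!/(n!(n+1)!) is the n-th Catalan number; i.e., the Catalan numbers are the power moments of the Marchenko–Pastur density W₂(x) = (1/(2π))√((4-x)/x) on [0, 4]. -/
/-!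
Substituting `x = 4t` turns the `n`-th moment into the Beta integral
`B(n + 1/2, 3/2) = Γ(n + 1/2) Γ(3/2) / (n + 1)!` times `4^(n+1) / (2π)`, and Legendre's
duplication formula gives `Γ(n + 1/2) = (2n)! √π / (4^n n!)`.
-/

open Real

theorem integral_rpow_mul_sub_rpow_eq_mul_beta {a s t : ℝ} (ha : 0 < a) (hs : 0 < s)
    (ht : 0 < t) :
    ∫ x in 0..a, x ^ (s - 1) * (a - x) ^ (t - 1) =
      a ^ (s + t - 1) * ProbabilityTheory.beta s t := by
  have hbeta : Complex.betaIntegral s t = (ProbabilityTheory.beta s t : ℂ) := by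
    rw [Complex.betaIntegral_eq_Gamma_mul_div _ _ (by simpa) (by simpa), ProbabilityTheory.beta]
    push_cast [← Complex.Gamma_ofReal]
    rfl
  have hcast : ∫ x in 0..a, (x : ℂ) ^ ((s : ℂ) - 1) * ((a : ℂ) - x) ^ ((t : ℂ) - 1) =
      ((∫ x in 0..a, x ^ (s - 1) * (a - x) ^ (t - 1) : ℝ) : ℂ) := by
    rw [← intervalIntegral.integral_ofReal]
    refine intervalIntegral.integral_congr fun x hx => ?_
    rw [Set.uIcc_of_le ha.le] at hx
    push_cast [Complex.ofReal_cpow hx.1, Complex.ofReal_cpow (sub_nonneg.2 hx.2)]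
    rfl
  have h := Complex.betaIntegral_scaled s t ha
  rw [hcast, hbeta, ← Complex.ofReal_one, ← Complex.ofReal_add, ← Complex.ofReal_sub,
    ← Complex.ofReal_cpow ha.le] at h
  exact_mod_cast h

theorem Real.Gamma_nat_add_half_eq_factorial (n : ℕ) :
    Gamma (n + 1 / 2) = (2 * n).factorial * √π / (4 ^ n * n.factorial) := by
  have h := Gamma_mul_Gamma_add_half (n + 1 / 2)
  rw [show (n : ℝ) + 1 / 2 + 1 / 2 = n + 1 by ring,
    show 2 * ((n : ℝ) + 1 / 2) = (2 * n : ℕ) + 1 by push_cast; ring,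
    show (1 : ℝ) - ((2 * n : ℕ) + 1) = -(2 * n : ℕ) by ring, Gamma_nat_eq_factorial,
    Gamma_nat_eq_factorial, rpow_neg zero_le_two, rpow_natCast, pow_mul] at h
  generalize Gamma (n + 1 / 2) = g at h ⊢
  norm_num at h
  field_simp at h ⊢
  linear_combination h

theorem pow_mul_sqrt_div_eq_rpow_mul_sqrt (n : ℕ) {x : ℝ} (hx : 0 ≤ x) (y : ℝ) :
    x ^ n * √(y / x) = x ^ ((n : ℝ) - 1 / 2) * √y := by
  rcases hx.eq_or_lt with rfl | hx
  · have hn : (n : ℝ) - 1 / 2 ≠ 0 := fun h => by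
      have := congrArg Int.fract (sub_eq_zero.1 h)
      norm_num at this
    rw [div_zero, sqrt_zero, mul_zero, zero_rpow hn, zero_mul]
  · rw [sqrt_div' _ hx.le, sqrt_eq_rpow x, rpow_sub hx, rpow_natCast]
    ring

/-- The Catalan numbers are the power moments on `[0, 4]` of the Marchenko–Pastur density
`W₂(x) = (1/(2π)) √((4-x)/x)`. -/
theorem catalan_moments_marchenko_pastur (n : ℕ) :
    ∫ x in (0 : ℝ)..4, x ^ n * (1 / (2 * Real.pi)) * Real.sqrt ((4 - x) / x) =
      ((2 * n).factorial : ℝ) / ((n.factorial : ℝ) * ((n + 1).factorial : ℝ)) := by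
  have hbeta : ∫ x in (0 : ℝ)..4, x ^ n * (1 / (2 * π)) * √((4 - x) / x) =
      1 / (2 * π) *
        ∫ x in (0 : ℝ)..4, x ^ ((n + 1 / 2 : ℝ) - 1) * (4 - x) ^ ((3 / 2 : ℝ) - 1) := by
    rw [← intervalIntegral.integral_const_mul]
    refine intervalIntegral.integral_congr fun x hx => ?_
    rw [Set.uIcc_of_le zero_le_four] at hx
    rw [show (n + 1 / 2 : ℝ) - 1 = n - 1 / 2 by ring, show (3 / 2 : ℝ) - 1 = 1 / 2 by norm_num,
      ← sqrt_eq_rpow, mul_right_comm, pow_mul_sqrt_div_eq_rpow_mul_sqrt n hx.1, mul_comm]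
  have hGamma_three_halves : Gamma (3 / 2) = √π / 2 := by
    rw [show (3 / 2 : ℝ) = (1 : ℕ) + 1 / 2 by norm_num, Gamma_nat_add_half_eq_factorial]
    norm_num
    ring
  rw [hbeta, integral_rpow_mul_sub_rpow_eq_mul_beta four_pos (by positivity) (by norm_num),
    ProbabilityTheory.beta, Gamma_nat_add_half_eq_factorial, hGamma_three_halves,
    show (n + 1 / 2 + 3 / 2 - 1 : ℝ) = (n + 1 : ℕ) by push_cast; ring, rpow_natCast,
    show (n + 1 / 2 + 3 / 2 : ℝ) = (n + 1 : ℕ) + 1 by push_cast; ring, Gamma_nat_eq_factorial]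
  have hpi : √π * √π = π := mul_self_sqrt pi_pos.le
  field_simp
  linear_combination 4 * 4 ^ n * hpi
end

section
/- For every even integer d ≥ 2, the sequence n ↦ (D_d(n))^{1/n} converges to 2^d as n → ∞. -/
open Finset Filter Topology

/-- The generalized sequence `D_d(n)` for even `d`. -/
noncomputable def seqD (d n : ℕ) : ℝ :=
  (∏ r ∈ Finset.range d, (r.factorial : ℝ) / ((n + r).factorial : ℝ)) *
    (∏ s ∈ Finset.range (d / 2), ((2 * n + 2 * s).factorial : ℝ) / ((2 * s).factorial : ℝ))

/-- The logarithms of the ratios telescope, so `log (a n) / n` is, up to `log (a 0) / n`,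
their Cesàro mean. -/
theorem tendsto_rpow_one_div_of_tendsto_div {a : ℕ → ℝ} (ha : ∀ n, 0 < a n) {L : ℝ}
    (hL : 0 < L) (h : Tendsto (fun n => a (n + 1) / a n) atTop (𝓝 L)) :
    Tendsto (fun n : ℕ => a n ^ ((1 : ℝ) / n)) atTop (𝓝 L) := by
  have hlog : Tendsto (fun n => Real.log (a (n + 1)) - Real.log (a n)) atTop
      (𝓝 (Real.log L)) :=
    (h.log hL.ne').congr fun n => Real.log_div (ha _).ne' (ha _).ne'
  have hmean : Tendsto (fun n : ℕ => Real.log (a n) * (1 / n)) atTop (𝓝 (Real.log L)) := by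
    have hcesaro := hlog.cesaro.add (tendsto_inv_atTop_nhds_zero_nat.mul_const (Real.log (a 0)))
    simp only [Finset.sum_range_sub (fun k => Real.log (a k)), zero_mul, add_zero] at hcesaro
    refine hcesaro.congr fun n => ?_
    ring
  simpa [Real.exp_log hL, Real.rpow_def_of_pos (ha _)] using hmean.rexp

theorem tendsto_two_mul_add_div_add (c : ℝ) :
    Tendsto (fun n : ℕ => (2 * n + c) / (n + c)) atTop (𝓝 2) := by
  have h := (tendsto_natCast_div_add_atTop c).const_add 1
  rw [one_add_one_eq_two] at h
  refine h.congr' ?_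
  have hden := tendsto_atTop_add_const_right _ c tendsto_natCast_atTop_atTop
  filter_upwards [hden.eventually_ne_atTop 0] with n hn
  field_simp
  ring

theorem Finset.prod_range_two_mul {M : Type*} [CommMonoid M] (f : ℕ → M) (m : ℕ) :
    ∏ r ∈ range (2 * m), f r = ∏ s ∈ range m, f (2 * s) * f (2 * s + 1) := by
  induction m with
  | zero => simp
  | succ m ih => rw [Nat.mul_succ, prod_range_succ, prod_range_succ, prod_range_succ, ih, mul_assoc]

theorem seqD_pos (d n : ℕ) : 0 < seqD d n := by
  unfold seqD
  positivity

theorem seqD_two_mul_succ (m n : ℕ) :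
    seqD (2 * m) (n + 1) =
      seqD (2 * m) n * ∏ r ∈ range (2 * m), (2 * n + r + 1 : ℝ) / (n + r + 1) := by
  have hP : ∏ r ∈ range (2 * m), (r.factorial : ℝ) / (n + 1 + r).factorial =
      (∏ r ∈ range (2 * m), (r.factorial : ℝ) / (n + r).factorial) /
        ∏ r ∈ range (2 * m), ((n : ℝ) + r + 1) := by
    rw [eq_div_iff (by positivity), ← prod_mul_distrib]
    refine prod_congr rfl fun r _ => ?_
    rw [show n + 1 + r = n + r + 1 by ring, Nat.factorial_succ]
    push_cast
    field_simp
  have hQ : ∏ s ∈ range m, ((2 * (n + 1) + 2 * s).factorial : ℝ) / (2 * s).factorial =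
      (∏ s ∈ range m, ((2 * n + 2 * s).factorial : ℝ) / (2 * s).factorial) *
        ∏ r ∈ range (2 * m), (2 * (n : ℝ) + r + 1) := by
    rw [prod_range_two_mul, ← prod_mul_distrib]
    refine prod_congr rfl fun s _ => ?_
    rw [show 2 * (n + 1) + 2 * s = 2 * n + 2 * s + 1 + 1 by ring, Nat.factorial_succ,
      Nat.factorial_succ]
    push_cast
    ring
  simp only [seqD, Nat.mul_div_cancel_left m two_pos, hP, hQ, prod_div_distrib]
  ring

theorem seqD_root_limit_general (d : ℕ) (hdeven : Even d) :
    Filter.Tendsto (fun n : ℕ => (seqD d n) ^ ((1 : ℝ) / n)) Filter.atTop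
      (𝓝 ((2 : ℝ) ^ (d : ℕ))) := by
  obtain ⟨m, rfl⟩ := hdeven.two_dvd
  refine tendsto_rpow_one_div_of_tendsto_div (seqD_pos _) (by positivity) ?_
  have hfactors := tendsto_finsetProd (range (2 * m)) fun (r : ℕ) _ =>
    tendsto_two_mul_add_div_add ((r : ℝ) + 1)
  rw [prod_const, card_range] at hfactors
  refine hfactors.congr fun n => ?_
  rw [seqD_two_mul_succ, mul_div_cancel_left₀ _ (seqD_pos _ _).ne']
  simp only [add_assoc]

/-- `(D_d(n))^{1/n} → 2^d` as `n → ∞`. -/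
theorem seqD_root_limit (d : ℕ) (hd : 2 ≤ d) (hdeven : Even d) :
    Filter.Tendsto (fun n : ℕ => (seqD d n) ^ ((1 : ℝ) / n)) Filter.atTop
      (𝓝 ((2 : ℝ) ^ (d : ℕ))) :=
  seqD_root_limit_general d hdeven
end

section
/- For every real z with 0 < z < 1/16, the series ∑_{n=0}^{∞} D₄(n) z^n converges and equals (1 + 6z)/(4z²) + ((1 - 16z)(1 + 112z))/(240π z³) · K(4√z) - (1 + 224z + 256z²)/(240π z³) · E(4√z), where K and E are the complete elliptic integrals of the first and second kind. -/
open Real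

/-- The sequence `D₄(n) = 6(2n)!(2n+2)!/(n!(n+1)!(n+2)!(n+3)!)`. -/
noncomputable def seqD4 (n : ℕ) : ℝ :=
  6 * ((2 * n).factorial : ℝ) * ((2 * n + 2).factorial : ℝ) /
    ((n.factorial : ℝ) * ((n + 1).factorial : ℝ) * ((n + 2).factorial : ℝ) *
      ((n + 3).factorial : ℝ))

/-- Complete elliptic integral of the first kind. -/
noncomputable def ellipticK (k : ℝ) : ℝ :=
  ∫ θ in (0 : ℝ)..(Real.pi / 2), (1 - k ^ 2 * Real.sin θ ^ 2) ^ (-(1 : ℝ) / 2)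

/-- Complete elliptic integral of the second kind. -/
noncomputable def ellipticE (k : ℝ) : ℝ :=
  ∫ θ in (0 : ℝ)..(Real.pi / 2), (1 - k ^ 2 * Real.sin θ ^ 2) ^ ((1 : ℝ) / 2)

/-!
With `b n = (-1)ⁿ (a choose n)`, the binomial series gives
`(1 - u sin² θ) ^ a = ∑ b n uⁿ sin²ⁿ θ`, and Wallis' integral `∫₀^{π/2} sin²ⁿ = (π/2) C(2n,n)/4ⁿ`
integrates it termwise. For `a = -1/2` and `a = 1/2` this gives
`(2/π) K(4√z) = ∑ C(2n,n)² zⁿ` and `(2/π) E(4√z) = ∑ C(2n,n)²/(1 - 2n) zⁿ`.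
Multiplying the first series by `(1 - 16z)(1 + 112z)` and the second by `1 + 224z + 256z²`,
the coefficients of `zⁿ⁺³` in the difference are `480 D₄(n)` (a rational identity in `n`, using
`(n+1) C(2n+2,n+1) = 2(2n+1) C(2n,n)`), while the coefficients of `1, z, z²` are `0, -120, -720`.
-/

theorem centralBinom_succ_eq (n : ℕ) :
    ((n + 1).centralBinom : ℝ) = 2 * (2 * n + 1) / (n + 1) * n.centralBinom := by
  rw [div_mul_eq_mul_div, eq_div_iff (by positivity), mul_comm]
  exact_mod_cast Nat.succ_mul_centralBinom_succ n

theorem centralBinom_succ_div_four_pow_succ (n : ℕ) :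
    ((n + 1).centralBinom : ℝ) / 4 ^ (n + 1) =
      (2 * n + 1) / (2 * n + 2) * (n.centralBinom / 4 ^ n) := by
  rw [centralBinom_succ_eq, pow_succ]
  field_simp
  ring

theorem one_sub_two_mul_natCast_ne_zero (n : ℕ) : (1 - 2 * n : ℝ) ≠ 0 :=
  sub_ne_zero.mpr (by norm_cast; omega)

theorem neg_one_pow_mul_choose_succ (a : ℝ) (n : ℕ) :
    (-1) ^ (n + 1) * Ring.choose a (n + 1) =
      (n - a) / (n + 1) * ((-1) ^ n * Ring.choose a n) := by
  have h := Ring.choose_smul_choose a (Nat.le_succ n)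
  rw [Nat.succ_eq_add_one, Nat.add_sub_cancel_left, Ring.choose_one_right,
    Nat.choose_succ_self_right, nsmul_eq_mul] at h
  push_cast at h
  field_simp
  linear_combination (-(-1) ^ n : ℝ) * h

theorem neg_one_pow_mul_choose_neg_half (n : ℕ) :
    (-1) ^ n * Ring.choose (-1 / 2 : ℝ) n = n.centralBinom / 4 ^ n := by
  induction n with
  | zero => simp
  | succ n ih =>
    rw [neg_one_pow_mul_choose_succ, ih, centralBinom_succ_div_four_pow_succ]
    field_simp
    ring

theorem neg_one_pow_mul_choose_half (n : ℕ) :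
    (-1) ^ n * Ring.choose (1 / 2 : ℝ) n = n.centralBinom / 4 ^ n / (1 - 2 * n) := by
  rw [eq_div_iff (one_sub_two_mul_natCast_ne_zero n)]
  induction n with
  | zero => simp
  | succ n ih =>
    rw [neg_one_pow_mul_choose_succ, centralBinom_succ_div_four_pow_succ, ← ih]
    push_cast
    field_simp
    ring

theorem hasSum_one_sub_rpow (a : ℝ) {u : ℝ} (hu : |u| < 1) :
    HasSum (fun n => (-1) ^ n * Ring.choose a n * u ^ n) ((1 - u) ^ a) := by
  have h := Real.one_add_rpow_hasFPowerSeriesOnBall_zero (a := a).hasSum (y := -u)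
    (by simpa [Real.enorm_eq_ofReal_abs, ENNReal.ofReal_lt_one] using hu)
  rw [zero_add, ← sub_eq_add_neg] at h
  simp only [binomialSeries, FormalMultilinearSeries.ofScalars_apply_eq, smul_eq_mul,
    neg_pow u] at h
  simpa only [mul_comm, mul_left_comm, mul_assoc] using h

theorem integral_sin_pow_two_mul_zero_pi_div_two (n : ℕ) :
    ∫ x in (0 : ℝ)..π / 2, sin x ^ (2 * n) = π / 2 * (n.centralBinom / 4 ^ n) := by
  induction n with
  | zero => simp
  | succ n ih =>
    rw [mul_add_one, integral_sin_pow, ih, centralBinom_succ_div_four_pow_succ]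
    simp only [sin_zero, cos_pi_div_two]
    push_cast
    ring

theorem hasSum_intervalIntegral_mul_pow {a b : ℝ} {c : ℕ → ℝ} (hc : Summable c) {f g : ℝ → ℝ}
    (hf : Continuous f) (hf1 : ∀ t ∈ Set.uIoc a b, |f t| ≤ 1)
    (hg : ∀ t ∈ Set.uIoc a b, HasSum (fun n => c n * f t ^ n) (g t)) :
    HasSum (fun n => c n * ∫ t in a..b, f t ^ n) (∫ t in a..b, g t) := by
  simp only [← intervalIntegral.integral_const_mul]
  refine intervalIntegral.hasSum_integral_of_dominated_convergence (fun n _ => |c n|)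
    (fun n => by fun_prop) (fun n => .of_forall fun t ht => ?_) (.of_forall fun _ _ => hc.abs)
    intervalIntegrable_const (.of_forall hg)
  rw [norm_mul, norm_pow, Real.norm_eq_abs, Real.norm_eq_abs]
  exact mul_le_of_le_one_right (abs_nonneg _) (pow_le_one₀ (abs_nonneg _) (hf1 t ht))

theorem hasSum_integral_one_sub_mul_sin_sq_rpow (a : ℝ) {u : ℝ} (hu : |u| < 1) :
    HasSum (fun n => (-1) ^ n * Ring.choose a n * u ^ n * (π / 2 * (n.centralBinom / 4 ^ n)))
      (∫ θ in (0 : ℝ)..π / 2, (1 - u * sin θ ^ 2) ^ a) := by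
  have hsin : ∀ θ, |sin θ ^ 2| ≤ 1 := fun θ => by
    rw [abs_of_nonneg (sq_nonneg _)]; exact sin_sq_le_one θ
  have h := hasSum_intervalIntegral_mul_pow (a := 0) (b := π / 2)
    (f := fun θ => sin θ ^ 2) (g := fun θ => (1 - u * sin θ ^ 2) ^ a)
    (hasSum_one_sub_rpow a hu).summable (by fun_prop) (fun θ _ => hsin θ) fun θ _ => ?_
  · simpa only [← pow_mul, integral_sin_pow_two_mul_zero_pi_div_two] using h
  · have hθ : |u * sin θ ^ 2| < 1 := by
      rw [abs_mul]; exact (mul_le_of_le_one_right (abs_nonneg u) (hsin θ)).trans_lt hu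
    simpa only [mul_pow, mul_assoc] using hasSum_one_sub_rpow a hθ

theorem hasSum_ellipticK {k : ℝ} (hk : |k| < 1) :
    HasSum (fun n => π / 2 * (n.centralBinom / 4 ^ n) ^ 2 * (k ^ 2) ^ n) (ellipticK k) := by
  have hk2 : |k ^ 2| < 1 := by rw [abs_pow]; exact pow_lt_one₀ (abs_nonneg k) hk two_ne_zero
  refine (hasSum_integral_one_sub_mul_sin_sq_rpow (-1 / 2) hk2).congr_fun fun n => ?_
  rw [neg_one_pow_mul_choose_neg_half]
  ring

theorem hasSum_ellipticE {k : ℝ} (hk : |k| < 1) :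
    HasSum (fun n : ℕ => π / 2 * ((n.centralBinom / 4 ^ n) ^ 2 / (1 - 2 * n)) * (k ^ 2) ^ n)
      (ellipticE k) := by
  have hk2 : |k ^ 2| < 1 := by rw [abs_pow]; exact pow_lt_one₀ (abs_nonneg k) hk two_ne_zero
  refine (hasSum_integral_one_sub_mul_sin_sq_rpow (1 / 2) hk2).congr_fun fun n => ?_
  rw [neg_one_pow_mul_choose_half]
  ring


theorem div_four_pow_sq_mul_sixteen_mul_pow (c z : ℝ) (n : ℕ) :
    (c / 4 ^ n) ^ 2 * (16 * z) ^ n = c ^ 2 * z ^ n := by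
  rw [mul_pow, show (16 : ℝ) ^ n = (4 ^ n) ^ 2 by rw [← pow_mul, mul_comm, pow_mul]; norm_num]
  field_simp

theorem abs_four_mul_sqrt_lt_one {z : ℝ} (hz0 : 0 ≤ z) (hz1 : z < 1 / 16) : |4 * √z| < 1 := by
  rw [abs_of_nonneg (by positivity)]
  nlinarith [Real.sq_sqrt hz0, Real.sqrt_nonneg z]

theorem four_mul_sqrt_sq {z : ℝ} (hz0 : 0 ≤ z) : (4 * √z) ^ 2 = 16 * z := by
  rw [mul_pow, Real.sq_sqrt hz0]; norm_num

theorem hasSum_centralBinom_sq_mul_pow {z : ℝ} (hz0 : 0 ≤ z) (hz1 : z < 1 / 16) :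
    HasSum (fun n => (n.centralBinom : ℝ) ^ 2 * z ^ n) (2 / π * ellipticK (4 * √z)) := by
  have h := (hasSum_ellipticK (abs_four_mul_sqrt_lt_one hz0 hz1)).mul_left (2 / π)
  rw [four_mul_sqrt_sq hz0] at h
  refine h.congr_fun fun n => ?_
  rw [← div_four_pow_sq_mul_sixteen_mul_pow]
  field_simp

theorem hasSum_centralBinom_sq_div_mul_pow {z : ℝ} (hz0 : 0 ≤ z) (hz1 : z < 1 / 16) :
    HasSum (fun n : ℕ => (n.centralBinom : ℝ) ^ 2 / (1 - 2 * n) * z ^ n)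
      (2 / π * ellipticE (4 * √z)) := by
  have h := (hasSum_ellipticE (abs_four_mul_sqrt_lt_one hz0 hz1)).mul_left (2 / π)
  rw [four_mul_sqrt_sq hz0] at h
  refine h.congr_fun fun n => ?_
  rw [div_mul_eq_mul_div, ← div_four_pow_sq_mul_sixteen_mul_pow]
  field_simp

theorem hasSum_mul_quadratic_nat_add_three {b : ℕ → ℝ} {z S : ℝ} (p q : ℝ)
    (h : HasSum (fun n => b n * z ^ n) S) :
    HasSum (fun n => (b (n + 3) + p * b (n + 2) + q * b (n + 1)) * z ^ (n + 3))
      ((1 + p * z + q * z ^ 2) * S -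
        (b 0 + (b 1 + p * b 0) * z + (b 2 + p * b 1 + q * b 0) * z ^ 2)) := by
  have h3 := (hasSum_nat_add_iff' 3).mpr h
  have h2 := ((hasSum_nat_add_iff' 2).mpr h).mul_left (p * z)
  have h1 := ((hasSum_nat_add_iff' 1).mpr h).mul_left (q * z ^ 2)
  have hsum : (1 + p * z + q * z ^ 2) * S -
      (b 0 + (b 1 + p * b 0) * z + (b 2 + p * b 1 + q * b 0) * z ^ 2) =
      S - ∑ i ∈ Finset.range 3, b i * z ^ i + p * z * (S - ∑ i ∈ Finset.range 2, b i * z ^ i) +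
        q * z ^ 2 * (S - ∑ i ∈ Finset.range 1, b i * z ^ i) := by
    simp only [Finset.sum_range_succ, Finset.sum_range_zero]
    ring
  rw [hsum]
  exact ((h3.add h2).add h1).congr_fun fun n => by ring

theorem centralBinom_mul_factorial_mul_factorial (n : ℕ) :
    n.centralBinom * n.factorial * n.factorial = (2 * n).factorial := by
  rw [Nat.centralBinom_eq_two_mul_choose, two_mul, Nat.add_choose_mul_factorial_mul_factorial]

theorem seqD4_eq_centralBinom (n : ℕ) :
    seqD4 n = 6 * n.centralBinom * (n + 1).centralBinom / ((n + 1) * (n + 2) ^ 2 * (n + 3)) := by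
  have h0 := centralBinom_mul_factorial_mul_factorial n
  have h1 := centralBinom_mul_factorial_mul_factorial (n + 1)
  rw [seqD4, ← h0, show 2 * n + 2 = 2 * (n + 1) by ring, ← h1]
  simp only [Nat.factorial_succ]
  push_cast
  have := Nat.factorial_pos n
  field_simp
  ring

theorem mul_seqD4_eq_centralBinom_sq (n : ℕ) :
    480 * seqD4 n =
      ((n + 3).centralBinom ^ 2 + 96 * (n + 2).centralBinom ^ 2 + -1792 * (n + 1).centralBinom ^ 2)
      - ((n + 3).centralBinom ^ 2 / (1 - 2 * ((n + 3 : ℕ) : ℝ))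
        + 224 * ((n + 2).centralBinom ^ 2 / (1 - 2 * ((n + 2 : ℕ) : ℝ)))
        + 256 * ((n + 1).centralBinom ^ 2 / (1 - 2 * ((n + 1 : ℕ) : ℝ)))) := by
  have e1 := centralBinom_succ_eq n
  have e2 : ((n + 2).centralBinom : ℝ) = _ := centralBinom_succ_eq (n + 1)
  have e3 : ((n + 3).centralBinom : ℝ) = _ := centralBinom_succ_eq (n + 2)
  have d1 : 1 - 2 * ((n + 1 : ℕ) : ℝ) = -(2 * n + 1) := by push_cast; ring
  have d2 : 1 - 2 * ((n + 2 : ℕ) : ℝ) = -(2 * n + 3) := by push_cast; ring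
  have d3 : 1 - 2 * ((n + 3 : ℕ) : ℝ) = -(2 * n + 5) := by push_cast; ring
  push_cast at e2 e3
  rw [seqD4_eq_centralBinom, d1, d2, d3, e3, e2, e1]
  field_simp
  ring

/-- The ordinary generating function of `D₄(n)` in terms of complete elliptic integrals. -/
theorem seqD4_ogf (z : ℝ) (hz0 : 0 < z) (hz1 : z < 1 / 16) :
    HasSum (fun n : ℕ => seqD4 n * z ^ n)
      ((1 + 6 * z) / (4 * z ^ 2) +
        ((1 - 16 * z) * (1 + 112 * z)) / (240 * Real.pi * z ^ 3) *
          ellipticK (4 * Real.sqrt z) -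
        (1 + 224 * z + 256 * z ^ 2) / (240 * Real.pi * z ^ 3) *
          ellipticE (4 * Real.sqrt z)) := by
  have hK := hasSum_mul_quadratic_nat_add_three 96 (-1792)
    (hasSum_centralBinom_sq_mul_pow hz0.le hz1)
  have hE := hasSum_mul_quadratic_nat_add_three 224 256
    (hasSum_centralBinom_sq_div_mul_pow hz0.le hz1)
  have h := ((hK.sub hE).mul_left (480 * z ^ 3)⁻¹).congr_fun fun n => show seqD4 n * z ^ n = _ by
    rw [← sub_mul, ← mul_seqD4_eq_centralBinom_sq]
    field_simp
    ring
  refine (congrArg (HasSum _) ?_).mp h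
  norm_num [Nat.centralBinom_eq_two_mul_choose, Nat.choose]
  field_simp
  ring
end

section
/- The function V₄(x) = (1/(15π²)) · [ (64/√x + 56√x + x^{3/2}/4) · E(√(1 - x/16)) - 2√x·(16 + x) · K(√(1 - x/16)) ] is strictly positive for every x ∈ (0, 16), where K and E are the complete elliptic integrals of the first and second kind. -/
open Real

/-- The weight function `V₄(x)`. -/
noncomputable def weightV4 (x : ℝ) : ℝ :=
  (1 / (15 * Real.pi ^ 2)) *
    ((64 / Real.sqrt x + 56 * Real.sqrt x + x ^ ((3 : ℝ) / 2) / 4) *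
        ellipticE (Real.sqrt (1 - x / 16)) -
      2 * Real.sqrt x * (16 + x) * ellipticK (Real.sqrt (1 - x / 16)))

/-! With `m = k² = 1 - x/16` the bracket in `V₄` equals
`(64/√x) ((16 - 16m + m²) E - 8(1-m)(2-m) K)`. Writing `s θ = √(1 - m sin² θ)`, the integrand
of this combination differs from `5 m⁴ sin⁴θ cos⁴θ / s³` by the derivative of
`sin θ cos θ (8m - 7m² - 2m²(1-m) sin²θ - m³ sin⁴θ) / s`, which vanishes at `0` and `π/2`.
Hence the combination equals `5 m⁴ ∫ sin⁴θ cos⁴θ / s³ dθ > 0`. -/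

open MeasureTheory intervalIntegral

section

variable {m : ℝ}

lemma one_sub_mul_sin_sq_pos (hm : m < 1) (θ : ℝ) : 0 < 1 - m * sin θ ^ 2 := by
  rcases le_or_gt m 0 with h | h
  · nlinarith [sq_nonneg (sin θ)]
  · nlinarith [sin_sq_le_one θ]

lemma continuous_sqrt_one_sub_mul_sin_sq : Continuous fun θ ↦ √(1 - m * sin θ ^ 2) := by
  fun_prop

lemma continuous_inv_sqrt_one_sub_mul_sin_sq (hm : m < 1) :
    Continuous fun θ ↦ (√(1 - m * sin θ ^ 2))⁻¹ :=
  continuous_sqrt_one_sub_mul_sin_sq.inv₀ fun θ ↦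
    (sqrt_pos.2 (one_sub_mul_sin_sq_pos hm θ)).ne'

lemma continuous_sin_mul_cos_pow_four_div_sqrt_pow_three (hm : m < 1) :
    Continuous fun θ ↦ (sin θ * cos θ) ^ 4 / √(1 - m * sin θ ^ 2) ^ 3 := by
  refine Continuous.div (by fun_prop) (by fun_prop) fun θ ↦ ?_
  exact pow_ne_zero _ (sqrt_pos.2 (one_sub_mul_sin_sq_pos hm θ)).ne'

noncomputable def ellipticEKAntideriv (m θ : ℝ) : ℝ :=
  sin θ * cos θ * (8 * m - 7 * m ^ 2 - 2 * m ^ 2 * (1 - m) * sin θ ^ 2 - m ^ 3 * sin θ ^ 4) /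
    √(1 - m * sin θ ^ 2)

lemma hasDerivAt_ellipticEKAntideriv (hm : m < 1) (θ : ℝ) :
    HasDerivAt (ellipticEKAntideriv m)
      ((16 - 16 * m + m ^ 2) * √(1 - m * sin θ ^ 2)
        - 8 * (1 - m) * (2 - m) * (√(1 - m * sin θ ^ 2))⁻¹
        - 5 * m ^ 4 * ((sin θ * cos θ) ^ 4 / √(1 - m * sin θ ^ 2) ^ 3)) θ := by
  have hw := one_sub_mul_sin_sq_pos hm θ
  have hs : √(1 - m * sin θ ^ 2) ≠ 0 := (sqrt_pos.2 hw).ne'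
  have hsin2 := (hasDerivAt_sin θ).fun_pow 2
  have hnum := ((hasDerivAt_sin θ).fun_mul (hasDerivAt_cos θ)).fun_mul
    ((((hasDerivAt_const θ (8 * m - 7 * m ^ 2)).fun_sub
      (hsin2.const_mul (2 * m ^ 2 * (1 - m)))).fun_sub
        (((hasDerivAt_sin θ).fun_pow 4).const_mul (m ^ 3))))
  have hden := ((hsin2.const_mul m).const_sub 1).sqrt hw.ne'
  have hs2 : √(1 - m * sin θ ^ 2) ^ 2 = 1 - m * sin θ ^ 2 := sq_sqrt hw.le
  have hc2 : cos θ ^ 2 = 1 - sin θ ^ 2 := cos_sq' θ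
  refine (hnum.fun_div hden hs).congr_deriv ?_
  generalize √(1 - m * sin θ ^ 2) = s at hs hs2 ⊢
  generalize sin θ = S at hs2 hc2 ⊢
  generalize cos θ = C at hc2 ⊢
  have hc4 : C ^ 4 = (1 - S ^ 2) ^ 2 := by rw [← hc2]; ring
  have hs4 : s ^ 4 = (1 - m * S ^ 2) ^ 2 := by rw [← hs2]; ring
  field_simp
  ring_nf
  simp only [hc4, hc2, hs4, hs2]
  ring

theorem integral_ellipticEK_combination_eq (hm : m < 1) :
    (16 - 16 * m + m ^ 2) * (∫ θ in (0)..(π / 2), √(1 - m * sin θ ^ 2))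
      - 8 * (1 - m) * (2 - m) * (∫ θ in (0)..(π / 2), (√(1 - m * sin θ ^ 2))⁻¹)
      = 5 * m ^ 4 *
        ∫ θ in (0)..(π / 2), (sin θ * cos θ) ^ 4 / √(1 - m * sin θ ^ 2) ^ 3 := by
  have hE : IntervalIntegrable (fun θ ↦ √(1 - m * sin θ ^ 2)) volume 0 (π / 2) :=
    continuous_sqrt_one_sub_mul_sin_sq.intervalIntegrable _ _
  have hK := (continuous_inv_sqrt_one_sub_mul_sin_sq hm).intervalIntegrable
    (μ := volume) 0 (π / 2)
  have hP := (continuous_sin_mul_cos_pow_four_div_sqrt_pow_three hm).intervalIntegrable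
    (μ := volume) 0 (π / 2)
  have hFTC := integral_eq_sub_of_hasDerivAt (fun θ _ ↦ hasDerivAt_ellipticEKAntideriv hm θ)
    (((hE.const_mul _).sub (hK.const_mul _)).sub (hP.const_mul _))
  rw [integral_sub ((hE.const_mul _).sub (hK.const_mul _)) (hP.const_mul _),
    integral_sub (hE.const_mul _) (hK.const_mul _)] at hFTC
  simp only [intervalIntegral.integral_const_mul, ellipticEKAntideriv, sin_zero, cos_pi_div_two,
    mul_zero, zero_mul, zero_div, sub_zero] at hFTC
  linarith

theorem integral_sin_mul_cos_pow_four_div_sqrt_pow_three_pos (hm : m < 1) :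
    0 < ∫ θ in (0)..(π / 2), (sin θ * cos θ) ^ 4 / √(1 - m * sin θ ^ 2) ^ 3 := by
  refine intervalIntegral_pos_of_pos_on
    ((continuous_sin_mul_cos_pow_four_div_sqrt_pow_three hm).intervalIntegrable _ _)
    (fun θ hθ ↦ ?_) (by positivity)
  have hsin : 0 < sin θ := sin_pos_of_pos_of_lt_pi hθ.1 (by linarith [hθ.2, pi_pos])
  have hcos : 0 < cos θ := cos_pos_of_mem_Ioo ⟨by linarith [hθ.1, pi_pos], hθ.2⟩
  have hs := sqrt_pos.2 (one_sub_mul_sin_sq_pos hm θ)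
  positivity

end

lemma ellipticE_eq_integral_sqrt (k : ℝ) :
    ellipticE k = ∫ θ in (0)..(π / 2), √(1 - k ^ 2 * sin θ ^ 2) := by
  simp only [ellipticE, sqrt_eq_rpow]

lemma ellipticK_eq_integral_inv_sqrt {k : ℝ} (hk : k ^ 2 < 1) :
    ellipticK k = ∫ θ in (0)..(π / 2), (√(1 - k ^ 2 * sin θ ^ 2))⁻¹ := by
  refine integral_congr fun θ _ ↦ ?_
  rw [neg_div, rpow_neg (one_sub_mul_sin_sq_pos hk θ).le, sqrt_eq_rpow]

theorem ellipticK_mul_lt_ellipticE_mul {k : ℝ} (hk0 : k ≠ 0) (hk1 : k ^ 2 < 1) :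
    8 * (1 - k ^ 2) * (2 - k ^ 2) * ellipticK k < (16 - 16 * k ^ 2 + k ^ 4) * ellipticE k := by
  rw [← sub_pos, ellipticE_eq_integral_sqrt, ellipticK_eq_integral_inv_sqrt hk1,
    show k ^ 4 = (k ^ 2) ^ 2 by ring, integral_ellipticEK_combination_eq hk1]
  exact mul_pos (by positivity) (integral_sin_mul_cos_pow_four_div_sqrt_pow_three_pos hk1)

lemma weightV4_coeff_ellipticE {x k : ℝ} (hx : 0 < x) (hk : k ^ 2 = 1 - x / 16) :
    64 / √x + 56 * √x + x ^ ((3 : ℝ) / 2) / 4 = 64 / √x * (16 - 16 * k ^ 2 + k ^ 4) := by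
  have hsx : √x ^ 2 = x := sq_sqrt hx.le
  rw [show k ^ 4 = (k ^ 2) ^ 2 by ring, hk, show ((3 : ℝ) / 2) = 1 + 1 / 2 by norm_num,
    rpow_add hx, rpow_one, ← sqrt_eq_rpow]
  field_simp
  linear_combination (57344 + 256 * x) * hsx

lemma weightV4_coeff_ellipticK {x k : ℝ} (hx : 0 < x) (hk : k ^ 2 = 1 - x / 16) :
    2 * √x * (16 + x) = 64 / √x * (8 * (1 - k ^ 2) * (2 - k ^ 2)) := by
  have hsx : √x ^ 2 = x := sq_sqrt hx.le
  rw [hk]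
  field_simp
  linear_combination (8192 + 512 * x) * hsx

/-- `V₄` is strictly positive on `(0, 16)`. -/
theorem weightV4_pos (x : ℝ) (hx0 : 0 < x) (hx1 : x < 16) : 0 < weightV4 x := by
  have hk : √(1 - x / 16) ^ 2 = 1 - x / 16 := sq_sqrt (by linarith)
  have hk0 : √(1 - x / 16) ≠ 0 := (sqrt_pos.2 (by linarith)).ne'
  have key := ellipticK_mul_lt_ellipticE_mul hk0 (by rw [hk]; linarith)
  rw [weightV4, weightV4_coeff_ellipticE hx0 hk, weightV4_coeff_ellipticK hx0 hk, mul_assoc,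
    mul_assoc, ← mul_sub]
  have hsx := sqrt_pos.2 hx0
  exact mul_pos (by positivity) (mul_pos (by positivity) (sub_pos.2 key))
end

section
/- For every integer d ≥ 2 there exists a function W : ℝ → ℝ that is continuous and strictly positive on the open interval (0, d^d), integrable on [0, d^d], and satisfies ∫_0^{d^d} x^n W(x) dx = C_d(n) for every natural number n; i.e., the d-dimensional Catalan numbers form a Hausdorff moment sequence with a positive absolutely continuous representing density supported on [0, d^d]. -/
/-!
Splitting `(dn)!` into residue classes mod `d` gives
`C_d(n) = d^(dn) ∏_{j=1}^{d-1} (j/d)_n / (j+1)_n`, and `(a)_n / (a+b)_n = B(a+n, b) / B(a, b)` is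
the `n`-th moment of the Beta(a, b) law. Hence `C_d(n)` is the `n`-th moment of
`d^d X_1 ⋯ X_{d-1}` for independent `X_j ∼ Beta(j/d, j+1-j/d)`. Writing `X_j = exp (-Y_j)` turns
the product into a sum, whose density is the convolution of the densities of the `Y_j`; it is
continuous and positive on `(0, ∞)`, and its pushforward along `y ↦ d^d exp (-y)` is the
required `W`.
-/

open Finset MeasureTheory

open Real Set
open scoped Convolution

theorem eq_of_succ_mul_eq {M₀ : Type*} [MonoidWithZero M₀] [IsRightCancelMulZero M₀]
    {f g p q : ℕ → M₀}
    (hp : ∀ n, p n ≠ 0) (hf : ∀ n, f (n + 1) * p n = f n * q n)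
    (hg : ∀ n, g (n + 1) * p n = g n * q n) (h₀ : f 0 = g 0) : f = g := by
  funext n
  induction n with
  | zero => exact h₀
  | succ n ih => exact mul_right_cancel₀ (hp n) (by rw [hf, hg, ih])

theorem catalanD_zero (d : ℕ) : catalanD d 0 = 1 := by
  simp [catalanD, Nat.factorial_ne_zero]

theorem catalanD_succ_mul (d n : ℕ) :
    catalanD d (n + 1) * ∏ p ∈ range d, ((n : ℝ) + p + 1) =
      catalanD d n * ∏ k ∈ range d, (((d * n : ℕ) : ℝ) + k + 1) := by
  have hfac : ((d * (n + 1)).factorial : ℝ) =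
      (d * n).factorial * ∏ k ∈ range d, (((d * n : ℕ) : ℝ) + k + 1) := by
    rw [mul_add_one, ← Nat.factorial_mul_ascFactorial, Nat.ascFactorial_eq_prod_range]
    push_cast
    exact congrArg _ (prod_congr rfl fun k _ => by ring)
  have hshift : ∀ p : ℕ, (p.factorial : ℝ) / (n + 1 + p).factorial * ((n : ℝ) + p + 1) =
      p.factorial / (n + p).factorial := fun p => by
    rw [show n + 1 + p = n + p + 1 by ring, Nat.factorial_succ]
    push_cast
    field_simp
  simp only [catalanD]
  rw [hfac, mul_right_comm, ← prod_mul_distrib, prod_congr rfl fun p _ => hshift p]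
  ring

theorem catalanD_succ_mul_prod (d n : ℕ) (hd : 1 ≤ d) :
    catalanD d (n + 1) * ∏ j ∈ range (d - 1), ((n : ℝ) + j + 2) =
      catalanD d n * ((d : ℝ) ^ d * ∏ j ∈ range (d - 1), ((n : ℝ) + (j + 1) / d)) := by
  have hd₀ : (d : ℝ) ≠ 0 := Nat.cast_ne_zero.2 (by omega)
  have hrange : range d = range (d - 1 + 1) := by rw [Nat.sub_add_cancel hd]
  have hleft : ∏ p ∈ range d, ((n : ℝ) + p + 1) =
      (n + 1) * ∏ j ∈ range (d - 1), ((n : ℝ) + j + 2) := by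
    rw [hrange, prod_range_succ', mul_comm]
    push_cast
    exact congrArg₂ _ (by ring) (prod_congr rfl fun j _ => by ring)
  have hright : ∏ k ∈ range d, (((d * n : ℕ) : ℝ) + k + 1) =
      (n + 1) * ((d : ℝ) ^ d * ∏ j ∈ range (d - 1), ((n : ℝ) + (j + 1) / d)) := by
    have hfactor (k : ℕ) : ((d * n : ℕ) : ℝ) + k + 1 = d * ((n : ℝ) + (k + 1) / d) := by
      push_cast
      field_simp
      ring
    rw [prod_congr rfl fun k _ => hfactor k, prod_mul_distrib, prod_const, card_range, hrange,
      prod_range_succ]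
    push_cast [Nat.cast_sub hd]
    field_simp
    ring
  have h := catalanD_succ_mul d n
  rw [hleft, hright, mul_left_comm, mul_left_comm (catalanD d n)] at h
  exact mul_left_cancel₀ (by positivity) h

structure IsHalfLineDensity (U : ℝ → ℝ) : Prop where
  continuous : Continuous U
  eq_zero_of_nonpos : ∀ y ≤ 0, U y = 0
  pos : ∀ y, 0 < y → 0 < U y
  bddAbove : BddAbove (range U)
  integrable : Integrable U

noncomputable def laplaceTransform (U : ℝ → ℝ) (s : ℝ) : ℝ :=
  ∫ y, exp (-(s * y)) * U y

theorem convolution_apply_eq_integral_mul (U V : ℝ → ℝ) (x : ℝ) :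
    (U ⋆ V) x = ∫ t, U t * V (x - t) := by
  simp [convolution_def]

theorem laplaceTransform_convolution (s : ℝ) {U V : ℝ → ℝ}
    (hU : Integrable fun y => exp (-(s * y)) * U y)
    (hV : Integrable fun y => exp (-(s * y)) * V y) :
    laplaceTransform (U ⋆ V) s = laplaceTransform U s * laplaceTransform V s := by
  have hexp : ∀ x, exp (-(s * x)) * (U ⋆ V) x =
      ((fun y => exp (-(s * y)) * U y) ⋆ fun y => exp (-(s * y)) * V y) x := fun x => by
    simp only [convolution_apply_eq_integral_mul, ← integral_const_mul]
    congr 1 with t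
    rw [show -(s * x) = -(s * t) + -(s * (x - t)) by ring, exp_add]
    ring
  simp only [laplaceTransform, hexp, integral_convolution _ hU hV]
  rfl

namespace IsHalfLineDensity

variable {U V : ℝ → ℝ}

theorem nonneg (hU : IsHalfLineDensity U) (y : ℝ) : 0 ≤ U y := by
  rcases le_or_gt y 0 with hy | hy
  · exact (hU.eq_zero_of_nonpos y hy).ge
  · exact (hU.pos y hy).le

theorem integral_pos (hU : IsHalfLineDensity U) : 0 < ∫ y, U y := by
  refine (integral_pos_iff_support_of_nonneg hU.nonneg hU.integrable).2 ?_
  exact hU.continuous.isOpen_support.measure_pos volume ⟨1, (hU.pos 1 one_pos).ne'⟩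

theorem integrable_exp_neg_mul (hU : IsHalfLineDensity U) {s : ℝ} (hs : 0 ≤ s) :
    Integrable fun y => exp (-(s * y)) * U y := by
  have := hU.continuous
  refine hU.integrable.mono' (by fun_prop : Continuous _).aestronglyMeasurable
    (ae_of_all _ fun y => ?_)
  rw [norm_mul, norm_of_nonneg (hU.nonneg y), norm_of_nonneg (exp_nonneg _)]
  rcases le_or_gt y 0 with hy | hy
  · simp [hU.eq_zero_of_nonpos y hy]
  · exact mul_le_of_le_one_left (hU.nonneg y) (exp_le_one_iff.2 (by nlinarith))

theorem integrable_mul_comp_sub (hU : IsHalfLineDensity U) (hV : IsHalfLineDensity V) (x : ℝ) :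
    Integrable fun t => U t * V (x - t) := by
  obtain ⟨C, hC⟩ := hU.bddAbove
  refine (hV.integrable.comp_sub_left x).bdd_mul (c := C) hU.continuous.aestronglyMeasurable
    (ae_of_all _ fun t => ?_)
  rw [norm_of_nonneg (hU.nonneg t)]
  exact hC (mem_range_self t)

theorem convolution (hU : IsHalfLineDensity U) (hV : IsHalfLineDensity V) :
    IsHalfLineDensity (U ⋆ V) := by
  have hcont : ∀ x, Continuous fun t => U t * V (x - t) := fun x => by
    have := hV.continuous; have := hU.continuous; fun_prop
  have hnonneg : ∀ x t, 0 ≤ U t * V (x - t) := fun x t => mul_nonneg (hU.nonneg t) (hV.nonneg _)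
  obtain ⟨C, hC⟩ := hV.bddAbove
  refine ⟨?_, fun x hx => ?_, fun x hx => ?_, ⟨C * ∫ t, U t, ?_⟩,
    hU.integrable.integrable_convolution _ hV.integrable⟩
  · have hCV : BddAbove (range fun y => ‖V y‖) := ⟨C, by
      rintro _ ⟨y, rfl⟩
      exact (norm_of_nonneg (hV.nonneg y)).trans_le (hC (mem_range_self y))⟩
    exact hCV.continuous_convolution_right_of_integrable _ hU.integrable hV.continuous
  · rw [convolution_apply_eq_integral_mul]
    refine integral_eq_zero_of_ae (ae_of_all _ fun t => ?_)
    rcases le_or_gt t 0 with ht | ht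
    · simp [hU.eq_zero_of_nonpos t ht]
    · simp [hV.eq_zero_of_nonpos (x - t) (by linarith)]
  · rw [convolution_apply_eq_integral_mul]
    refine (integral_pos_iff_support_of_nonneg (hnonneg x) (hU.integrable_mul_comp_sub hV x)).2 ?_
    refine (hcont x).isOpen_support.measure_pos volume ⟨x / 2, (mul_pos (hU.pos _ ?_) ?_).ne'⟩
    · linarith
    · exact hV.pos _ (by linarith)
  · rintro _ ⟨x, rfl⟩
    rw [convolution_apply_eq_integral_mul, ← integral_const_mul]
    refine integral_mono (hU.integrable_mul_comp_sub hV x) (hU.integrable.const_mul C) fun t => ?_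
    rw [mul_comm C]
    exact mul_le_mul_of_nonneg_left (hC (mem_range_self _)) (hU.nonneg t)

end IsHalfLineDensity

section IteratedConvolution

noncomputable def iterConv (f : ℕ → ℝ → ℝ) : ℕ → ℝ → ℝ
  | 0 => f 0
  | k + 1 => iterConv f k ⋆ f (k + 1)

variable {f : ℕ → ℝ → ℝ}

theorem IsHalfLineDensity.iterConv (hf : ∀ j, IsHalfLineDensity (f j)) (k : ℕ) :
    IsHalfLineDensity (iterConv f k) := by
  induction k with
  | zero => exact hf 0
  | succ k ih => exact ih.convolution (hf (k + 1))

theorem laplaceTransform_iterConv (hf : ∀ j, IsHalfLineDensity (f j)) {s : ℝ} (hs : 0 ≤ s)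
    (k : ℕ) :
    laplaceTransform (iterConv f k) s = ∏ j ∈ range (k + 1), laplaceTransform (f j) s := by
  induction k with
  | zero => simp [iterConv]
  | succ k ih =>
    rw [iterConv, laplaceTransform_convolution s
      ((IsHalfLineDensity.iterConv hf k).integrable_exp_neg_mul hs)
      ((hf (k + 1)).integrable_exp_neg_mul hs), ih, prod_range_succ _ (k + 1)]

end IteratedConvolution

theorem hasDerivAt_mul_exp_neg (A y : ℝ) :
    HasDerivAt (fun y => A * exp (-y)) (-(A * exp (-y))) y := by
  simpa using ((hasDerivAt_neg y).exp).const_mul A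

theorem image_mul_exp_neg_Ioi {A : ℝ} (hA : 0 < A) :
    (fun y => A * exp (-y)) '' Ioi 0 = Ioo 0 A := by
  ext x
  constructor
  · rintro ⟨y, hy, rfl⟩
    exact ⟨by positivity, mul_lt_of_lt_one_right hA (exp_lt_one_iff.2 (neg_lt_zero.2 hy))⟩
  · rintro ⟨hx₀, hxA⟩
    refine ⟨log (A / x), log_pos ((one_lt_div hx₀).2 hxA), ?_⟩
    simp only [exp_neg, exp_log (div_pos hA hx₀)]
    field_simp

theorem integral_Ioo_eq_integral_Ioi_mul_exp_neg {A : ℝ} (hA : 0 < A) (g : ℝ → ℝ) :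
    ∫ x in Ioo 0 A, g x = ∫ y in Ioi 0, A * exp (-y) * g (A * exp (-y)) := by
  rw [← image_mul_exp_neg_Ioi hA, integral_image_eq_integral_abs_deriv_smul measurableSet_Ioi
    (fun y _ => (hasDerivAt_mul_exp_neg A y).hasDerivWithinAt)
    ((mul_right_injective₀ hA.ne').comp (exp_injective.comp neg_injective)).injOn]
  simp [abs_of_pos hA]

theorem integrableOn_Ioo_iff_integrableOn_Ioi_mul_exp_neg {A : ℝ} (hA : 0 < A) (g : ℝ → ℝ) :
    IntegrableOn g (Ioo 0 A) ↔
      IntegrableOn (fun y => A * exp (-y) * g (A * exp (-y))) (Ioi 0) := by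
  rw [← image_mul_exp_neg_Ioi hA, integrableOn_image_iff_integrableOn_abs_deriv_smul
    measurableSet_Ioi (fun y _ => (hasDerivAt_mul_exp_neg A y).hasDerivWithinAt)
    ((mul_right_injective₀ hA.ne').comp (exp_injective.comp neg_injective)).injOn]
  simp [abs_of_pos hA]

/-- Up to normalisation, the density of `-log X` for `X ∼ Beta(a, b)`. The `max` keeps the base
of the real power nonnegative, so that (for `b ≠ 1`) the function vanishes on `y ≤ 0`. -/
noncomputable def betaLogDensity (a b y : ℝ) : ℝ :=
  exp (-(a * y)) * max (1 - exp (-y)) 0 ^ (b - 1)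

section BetaLogDensity

variable {a b : ℝ}

theorem betaLogDensity_of_nonpos (hb : 1 < b) {y : ℝ} (hy : y ≤ 0) :
    betaLogDensity a b y = 0 := by
  rw [betaLogDensity, max_eq_right (by linarith [one_le_exp (neg_nonneg.2 hy)]),
    zero_rpow (by linarith), mul_zero]

theorem betaLogDensity_of_pos {y : ℝ} (hy : 0 < y) :
    betaLogDensity a b y = exp (-(a * y)) * (1 - exp (-y)) ^ (b - 1) := by
  rw [betaLogDensity, max_eq_left (by linarith [exp_le_one_iff.2 (neg_nonpos.2 hy.le)])]

theorem exp_neg_mul_mul_betaLogDensity (s a b y : ℝ) :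
    exp (-(s * y)) * betaLogDensity a b y = betaLogDensity (a + s) b y := by
  rw [betaLogDensity, betaLogDensity, ← mul_assoc, ← exp_add]
  ring_nf

theorem isHalfLineDensity_betaLogDensity (ha : 0 < a) (hb : 1 < b) :
    IsHalfLineDensity (betaLogDensity a b) := by
  have hcont : Continuous (betaLogDensity a b) :=
    (by fun_prop : Continuous fun y => exp (-(a * y))).mul
      ((by fun_prop : Continuous fun y => max (1 - exp (-y)) 0).rpow_const
        fun _ => Or.inr (by linarith))
  have hle : ∀ y, betaLogDensity a b y ≤ (Set.Ioi 0).indicator (fun y => exp (-(a * y))) y := by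
    intro y
    rcases le_or_gt y 0 with hy | hy
    · rw [betaLogDensity_of_nonpos hb hy]
      exact Set.indicator_nonneg (fun _ _ => (exp_pos _).le) y
    · rw [indicator_of_mem (Set.mem_Ioi.2 hy), betaLogDensity_of_pos hy]
      refine mul_le_of_le_one_right (exp_nonneg _) (rpow_le_one ?_ ?_ (by linarith)) <;>
        linarith [exp_pos (-y), exp_lt_one_iff.2 (neg_lt_zero.2 hy)]
  have hpos : ∀ y, 0 < y → 0 < betaLogDensity a b y := fun y hy => by
    rw [betaLogDensity_of_pos hy]
    exact mul_pos (exp_pos _)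
      (rpow_pos_of_pos (by linarith [exp_lt_one_iff.2 (neg_lt_zero.2 hy)]) _)
  have hnonneg : ∀ y, 0 ≤ betaLogDensity a b y := fun y =>
    mul_nonneg (exp_nonneg _) (rpow_nonneg (le_max_right _ _) _)
  have hind : Integrable ((Set.Ioi 0).indicator fun y => exp (-(a * y))) := by
    rw [integrable_indicator_iff measurableSet_Ioi]
    simpa [neg_mul] using exp_neg_integrableOn_Ioi 0 ha
  refine ⟨hcont, fun y hy => betaLogDensity_of_nonpos hb hy, hpos, ⟨1, ?_⟩,
    hind.mono' hcont.aestronglyMeasurable (ae_of_all _ fun y => ?_)⟩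
  · rintro _ ⟨y, rfl⟩
    refine (hle y).trans ?_
    rcases le_or_gt y 0 with hy | hy
    · simp [hy]
    · rw [indicator_of_mem (Set.mem_Ioi.2 hy), exp_le_one_iff]
      nlinarith
  · rw [norm_of_nonneg (hnonneg y)]
    exact hle y

theorem Complex.betaIntegral_ofReal (a b : ℝ) :
    Complex.betaIntegral a b = ↑(∫ x in (0 : ℝ)..1, x ^ (a - 1) * (1 - x) ^ (b - 1)) := by
  rw [Complex.betaIntegral, ← intervalIntegral.integral_ofReal]
  refine intervalIntegral.integral_congr fun x hx => ?_
  rw [Set.uIcc_of_le zero_le_one] at hx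
  push_cast [Complex.ofReal_cpow hx.1, Complex.ofReal_cpow (sub_nonneg.2 hx.2)]
  rfl

theorem integral_betaLogDensity (ha : 0 < a) (hb : 1 < b) :
    ∫ y, betaLogDensity a b y = Gamma a * Gamma b / Gamma (a + b) := by
  have hreal :
      ∫ x in (0 : ℝ)..1, x ^ (a - 1) * (1 - x) ^ (b - 1) = ∫ y, betaLogDensity a b y := by
    rw [intervalIntegral.integral_of_le zero_le_one, integral_Ioc_eq_integral_Ioo,
      integral_Ioo_eq_integral_Ioi_mul_exp_neg one_pos,
      ← setIntegral_eq_integral_of_forall_compl_eq_zero fun y hy =>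
        betaLogDensity_of_nonpos hb (not_lt.1 hy)]
    refine setIntegral_congr_fun measurableSet_Ioi fun y hy => ?_
    rw [betaLogDensity_of_pos hy, one_mul, rpow_def_of_pos (exp_pos _), log_exp,
      ← mul_assoc, ← exp_add]
    ring_nf
  have hcomplex := Complex.Gamma_mul_Gamma_eq_betaIntegral (s := a) (t := b)
    (by simpa using ha) (by simpa using hb.trans' one_pos)
  rw [Complex.betaIntegral_ofReal, hreal, ← Complex.ofReal_add, Complex.Gamma_ofReal,
    Complex.Gamma_ofReal, Complex.Gamma_ofReal] at hcomplex
  norm_cast at hcomplex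
  rw [hcomplex, mul_div_cancel_left₀ _ (Gamma_pos_of_pos (by linarith)).ne']

theorem integral_betaLogDensity_add_one (ha : 0 < a) (hb : 1 < b) :
    (a + b) * ∫ y, betaLogDensity (a + 1) b y = a * ∫ y, betaLogDensity a b y := by
  rw [integral_betaLogDensity (by linarith) hb, integral_betaLogDensity ha hb,
    add_right_comm, Gamma_add_one ha.ne', Gamma_add_one (by linarith)]
  field_simp [(Gamma_pos_of_pos (by linarith : 0 < a + b)).ne']

end BetaLogDensity

noncomputable def catalanLogDensity (d : ℕ) : ℝ → ℝ :=
  iterConv (fun j : ℕ => betaLogDensity ((j + 1) / d) (j + 2 - (j + 1) / d)) (d - 2)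

section CatalanLogDensity

variable {d : ℕ}

theorem one_lt_add_two_sub_div (hd : 2 ≤ d) (j : ℕ) : 1 < (j : ℝ) + 2 - (j + 1) / d := by
  have hd' : (2 : ℝ) ≤ d := by exact_mod_cast hd
  have : ((j : ℝ) + 1) / d < j + 1 := div_lt_self (by positivity) (by linarith)
  linarith

theorem isHalfLineDensity_betaLogDensity_catalan (hd : 2 ≤ d) (j : ℕ) :
    IsHalfLineDensity (betaLogDensity ((j + 1) / d) (j + 2 - (j + 1) / d)) :=
  isHalfLineDensity_betaLogDensity (div_pos (by positivity) (by norm_cast; omega))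
    (one_lt_add_two_sub_div hd j)

theorem isHalfLineDensity_catalanLogDensity (hd : 2 ≤ d) :
    IsHalfLineDensity (catalanLogDensity d) :=
  .iterConv (isHalfLineDensity_betaLogDensity_catalan hd) _

theorem laplaceTransform_catalanLogDensity_succ (hd : 2 ≤ d) (n : ℕ) :
    laplaceTransform (catalanLogDensity d) (n + 1) * ∏ j ∈ range (d - 1), ((n : ℝ) + j + 2) =
      laplaceTransform (catalanLogDensity d) n *
        ∏ j ∈ range (d - 1), ((n : ℝ) + (j + 1) / d) := by
  have hlaplace (s : ℝ) (hs : 0 ≤ s) : laplaceTransform (catalanLogDensity d) s =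
      ∏ j ∈ range (d - 1), ∫ y, betaLogDensity ((j + 1) / d + s) (j + 2 - (j + 1) / d) y := by
    rw [catalanLogDensity, laplaceTransform_iterConv (isHalfLineDensity_betaLogDensity_catalan hd)
      hs, show d - 2 + 1 = d - 1 by omega]
    simp only [laplaceTransform, exp_neg_mul_mul_betaLogDensity]
  rw [hlaplace _ (by positivity), hlaplace _ (by positivity), ← prod_mul_distrib,
    ← prod_mul_distrib]
  refine prod_congr rfl fun j _ => ?_
  have ha : 0 < ((j : ℝ) + 1) / d + n := by
    have : (0 : ℝ) < d := by norm_cast; omega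
    positivity
  rw [show ((j : ℝ) + 1) / d + (n + 1) = (j + 1) / d + n + 1 by ring, mul_comm,
    show (n : ℝ) + j + 2 = (j + 1) / d + n + (j + 2 - (j + 1) / d) by ring,
    integral_betaLogDensity_add_one ha (one_lt_add_two_sub_div hd j)]
  ring

theorem pow_mul_laplaceTransform_catalanLogDensity (hd : 2 ≤ d) (n : ℕ) :
    ((d : ℝ) ^ d) ^ n * laplaceTransform (catalanLogDensity d) n =
      catalanD d n * ∫ y, catalanLogDensity d y := by
  let f : ℕ → ℝ := fun n => ((d : ℝ) ^ d) ^ n * laplaceTransform (catalanLogDensity d) n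
  let g : ℕ → ℝ := fun n => catalanD d n * ∫ y, catalanLogDensity d y
  refine congrFun (eq_of_succ_mul_eq (f := f) (g := g)
    (p := fun n => ∏ j ∈ range (d - 1), ((n : ℝ) + j + 2))
    (q := fun n => (d : ℝ) ^ d * ∏ j ∈ range (d - 1), ((n : ℝ) + (j + 1) / d))
    (fun n => prod_ne_zero_iff.2 fun j _ => by positivity) (fun n => ?_) (fun n => ?_) ?_) n
  · simp only [f]
    rw [pow_succ, mul_assoc, Nat.cast_succ, laplaceTransform_catalanLogDensity_succ hd]
    ring
  · simp only [g]
    rw [mul_right_comm, catalanD_succ_mul_prod d n (by omega)]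
    ring
  · simp [f, g, catalanD_zero, laplaceTransform]

end CatalanLogDensity

/-- If `Y` has density `U`, then `A * exp (-Y)` has density `expNegPushforward A U` on `(0, A)`. -/
noncomputable def expNegPushforward (A : ℝ) (U : ℝ → ℝ) (x : ℝ) : ℝ :=
  U (log (A / x)) / x

section ExpNegPushforward

variable {A : ℝ} {U : ℝ → ℝ}

theorem continuousOn_expNegPushforward (hA : A ≠ 0) (hU : Continuous U) :
    ContinuousOn (expNegPushforward A U) {0}ᶜ := by
  exact (hU.comp_continuousOn ((continuousOn_const.div continuousOn_id fun x hx => hx).log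
    fun x hx => div_ne_zero hA hx)).div continuousOn_id fun x hx => hx

theorem expNegPushforward_pos (hU : ∀ y, 0 < y → 0 < U y) {x : ℝ} (hx : x ∈ Ioo 0 A) :
    0 < expNegPushforward A U x :=
  div_pos (hU _ (log_pos ((one_lt_div hx.1).2 hx.2))) hx.1

theorem mul_exp_neg_mul_expNegPushforward (hA : 0 < A) (y : ℝ) :
    A * exp (-y) * expNegPushforward A U (A * exp (-y)) = U y := by
  have : A / (A * exp (-y)) = exp y := by rw [exp_neg]; field_simp
  rw [expNegPushforward, this, log_exp]
  field_simp

theorem integrableOn_expNegPushforward (hA : 0 < A) (hU : IntegrableOn U (Set.Ioi 0)) :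
    IntegrableOn (expNegPushforward A U) (Icc 0 A) := by
  rw [integrableOn_Icc_iff_integrableOn_Ioo, integrableOn_Ioo_iff_integrableOn_Ioi_mul_exp_neg hA]
  simpa only [mul_exp_neg_mul_expNegPushforward hA] using hU

theorem integral_pow_mul_expNegPushforward (hA : 0 < A) (hU : ∀ y ≤ 0, U y = 0) (n : ℕ) :
    ∫ x in (0 : ℝ)..A, x ^ n * expNegPushforward A U x = A ^ n * laplaceTransform U n := by
  have hsubst (y : ℝ) :
      A * exp (-y) * ((A * exp (-y)) ^ n * expNegPushforward A U (A * exp (-y))) =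
      A ^ n * (exp (-(n * y)) * U y) := by
    rw [mul_left_comm, mul_exp_neg_mul_expNegPushforward hA, mul_pow, ← exp_nat_mul]
    ring_nf
  rw [intervalIntegral.integral_of_le hA.le, integral_Ioc_eq_integral_Ioo,
    integral_Ioo_eq_integral_Ioi_mul_exp_neg hA]
  simp only [hsubst]
  rw [setIntegral_eq_integral_of_forall_compl_eq_zero fun y hy => by
      rw [hU y (not_lt.1 hy), mul_zero, mul_zero], integral_const_mul, laplaceTransform]

end ExpNegPushforward

/-- The `d`-dimensional Catalan numbers form a Hausdorff moment sequence with a positive,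
absolutely continuous representing density supported on `[0, d^d]`. -/
theorem catalanD_hausdorff_solution (d : ℕ) (hd : 2 ≤ d) :
    ∃ W : ℝ → ℝ,
      ContinuousOn W (Set.Ioo (0 : ℝ) ((d : ℝ) ^ (d : ℕ))) ∧
      (∀ x ∈ Set.Ioo (0 : ℝ) ((d : ℝ) ^ (d : ℕ)), 0 < W x) ∧
      IntegrableOn W (Set.Icc (0 : ℝ) ((d : ℝ) ^ (d : ℕ))) ∧
      (∀ n : ℕ, ∫ x in (0 : ℝ)..((d : ℝ) ^ (d : ℕ)), x ^ n * W x = catalanD d n) := by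
  have hA : (0 : ℝ) < d ^ d := by positivity
  have hU := isHalfLineDensity_catalanLogDensity hd
  have hZ := hU.integral_pos
  refine ⟨fun x => expNegPushforward (d ^ d) (catalanLogDensity d) x /
    ∫ y, catalanLogDensity d y, ?_, fun x hx => div_pos (expNegPushforward_pos hU.pos hx) hZ,
    (integrableOn_expNegPushforward hA hU.integrable.integrableOn).div_const _, fun n => ?_⟩
  · exact ((continuousOn_expNegPushforward hA.ne' hU.continuous).mono
      fun x hx => hx.1.ne').div_const _
  · simp only [mul_div_assoc']
    rw [intervalIntegral.integral_div, integral_pow_mul_expNegPushforward hA hU.eq_zero_of_nonpos,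
      pow_mul_laplaceTransform_catalanLogDensity hd, mul_div_cancel_right₀ _ hZ.ne']
end

section
/- For every even integer d ≥ 2 and every natural number n, the exponential-generating-function coefficient identity holds: D_d(n)/n! = 2^{dn} · (∏_{k=1}^{d/2} (k - 1/2)_n) · (∏_{k=1}^{d/2} (k)_n) / (n! · ∏_{k=1}^{d} (k)_n); equivalently, the exponential generating function ∑_n D_d(n) z^n/n! is the generalized hypergeometric series _dF_d with upper parameters 1/2, 3/2, …, (d-1)/2, 1, 2, …, d/2, lower parameters 1, 2, …, d, and argument 2^d z. -/
open Finset

/-!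
Both products in `D_d(n)` are products of Pochhammer symbols: `(n + r)! / r! = (r + 1)_n`, and,
by the duplication formula `(2a)_{2n} = 4^n (a)_n (a + 1/2)_n` at `a = s + 1/2`,
`(2n + 2s)! / (2s)! = (2s + 1)_{2n} = 4^n (s + 1/2)_n (s + 1)_n`.
-/

theorem prod_Icc_one_eq_prod_range {M : Type*} [CommMonoid M] (f : ℕ → M) (e : ℕ) :
    ∏ k ∈ Icc 1 e, f k = ∏ i ∈ range e, f (i + 1) := by
  rw [range_eq_Ico, prod_Ico_add', ← Ico_add_one_right_eq_Icc, zero_add]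

namespace ascFactorial

theorem succ (a : ℝ) (n : ℕ) : ascFactorial a (n + 1) = ascFactorial a n * (a + n) :=
  prod_range_succ _ _

theorem natCast (m n : ℕ) : ascFactorial m n = (m.ascFactorial n : ℝ) := by
  simp [ascFactorial, Nat.ascFactorial_eq_prod_range]

theorem two_mul (a : ℝ) (n : ℕ) :
    ascFactorial (2 * a) (2 * n) = 4 ^ n * ascFactorial a n * ascFactorial (a + 1 / 2) n := by
  induction n with
  | zero => simp [ascFactorial]
  | succ n ih =>
    rw [show 2 * (n + 1) = 2 * n + 1 + 1 by ring, succ, succ, ih, succ, succ]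
    push_cast
    ring

end ascFactorial

theorem factorial_add_eq_mul_ascFactorial (r n : ℕ) :
    ((r + n).factorial : ℝ) = r.factorial * ascFactorial (r + 1) n := by
  rw [← Nat.factorial_mul_ascFactorial, ← Nat.cast_add_one, ascFactorial.natCast]
  push_cast
  rfl

theorem factorial_two_mul_add_eq (s n : ℕ) :
    ((2 * s + 2 * n).factorial : ℝ) =
      (2 * s).factorial * 4 ^ n * ascFactorial (s + 1 / 2) n * ascFactorial (s + 1) n := by
  rw [factorial_add_eq_mul_ascFactorial,
    show ((2 * s : ℕ) : ℝ) + 1 = 2 * (s + 1 / 2) by push_cast; ring,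
    ascFactorial.two_mul, show (s : ℝ) + 1 / 2 + 1 / 2 = s + 1 by ring]
  ring

theorem prod_factorial_div_factorial_add (d n : ℕ) :
    ∏ r ∈ range d, (r.factorial : ℝ) / (n + r).factorial =
      (∏ k ∈ Icc 1 d, ascFactorial k n)⁻¹ := by
  rw [prod_Icc_one_eq_prod_range, ← prod_inv_distrib]
  refine prod_congr rfl fun r _ => ?_
  rw [add_comm n, factorial_add_eq_mul_ascFactorial, Nat.cast_add_one,
    div_mul_cancel_left₀ (by positivity)]

theorem prod_factorial_two_mul_add_div (m n : ℕ) :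
    ∏ s ∈ range m, ((2 * n + 2 * s).factorial : ℝ) / (2 * s).factorial =
      4 ^ (m * n) * (∏ k ∈ Icc 1 m, ascFactorial (k - 1 / 2) n) *
        ∏ k ∈ Icc 1 m, ascFactorial k n := by
  have hfactor : ∀ s ∈ range m, ((2 * n + 2 * s).factorial : ℝ) / (2 * s).factorial =
      4 ^ n * (ascFactorial ((s + 1 : ℕ) - 1 / 2) n * ascFactorial (s + 1 : ℕ) n) := by
    intro s _
    rw [add_comm (2 * n), factorial_two_mul_add_eq, Nat.cast_add_one,
      show (s : ℝ) + 1 - 1 / 2 = s + 1 / 2 by ring, mul_assoc, mul_assoc,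
      mul_div_cancel_left₀ _ (by positivity)]
  rw [prod_congr rfl hfactor, prod_mul_distrib, prod_const, card_range, ← pow_mul, mul_comm n,
    mul_assoc, prod_Icc_one_eq_prod_range, prod_Icc_one_eq_prod_range, prod_mul_distrib]

theorem seqD_egf_coeff_general (d : ℕ) (hdeven : Even d) (n : ℕ) :
    seqD d n / (n.factorial : ℝ) =
      (2 : ℝ) ^ (d * n) * (∏ k ∈ Finset.Icc 1 (d / 2), ascFactorial ((k : ℝ) - 1 / 2) n) *
          (∏ k ∈ Finset.Icc 1 (d / 2), ascFactorial (k : ℝ) n) /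
        ((n.factorial : ℝ) * ∏ k ∈ Finset.Icc 1 d, ascFactorial (k : ℝ) n) := by
  obtain ⟨m, rfl⟩ := hdeven
  have hm : (m + m) / 2 = m := by omega
  have hpow : (2 : ℝ) ^ ((m + m) * n) = 4 ^ (m * n) := by
    rw [← two_mul, mul_assoc, pow_mul]; norm_num
  rw [seqD, prod_factorial_div_factorial_add, hm, prod_factorial_two_mul_add_div, hpow,
    div_mul_eq_div_div_swap, inv_mul_eq_div]

/-- The egf coefficients of `D_d(n)` are the coefficients of the hypergeometric series
`_dF_d` with upper parameters `1/2, 3/2, …, (d-1)/2, 1, 2, …, d/2`, lower parameters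
`1, 2, …, d`, at argument `2^d z`. -/
theorem seqD_egf_coeff (d : ℕ) (hd : 2 ≤ d) (hdeven : Even d) (n : ℕ) :
    seqD d n / (n.factorial : ℝ) =
      (2 : ℝ) ^ (d * n) * (∏ k ∈ Finset.Icc 1 (d / 2), ascFactorial ((k : ℝ) - 1 / 2) n) *
          (∏ k ∈ Finset.Icc 1 (d / 2), ascFactorial (k : ℝ) n) /
        ((n.factorial : ℝ) * ∏ k ∈ Finset.Icc 1 d, ascFactorial (k : ℝ) n) :=
  seqD_egf_coeff_general d hdeven n
end
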